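/- The HH-component of the curvature of the linearized connection is minus the fibre derivative of the curvature of the nonlinear connection: in local coordinates, Curv(H_i, H_j)e_A = −(∂R^B_{ij}/∂u^A) e_B, where R^B_{ij} = H_j(Γ^B_i) − H_i(Γ^B_j) are the components of the curvature of the nonlinear connection. -/

import Mathlib

/-! The horizontal fields `H_l = (e_l, -Γ_l)` have constant base part, so `[H_i, H_j]` is vertical
and `D_{[H_i, H_j]}` annihilates the constant section `e_A`. By the product rule and the symmetry
of second derivatives, `D_{H_b}(∂_u Γ_a · w)` is the fibre derivative of `H_b(Γ_a)` in the
direction `w` plus a term symmetric in `a, b`; in `Curv(H_i, H_j) e_A` the symmetric terms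
cancel and what is left is `-∂_u R_{ij} · e_A`. -/

noncomputable section

/-- Total space of the (locally trivialized) vector bundle `π : E = ℝⁿ × ℝᵐ → M = ℝⁿ`. -/
abbrev EE (n m : ℕ) := (Fin n → ℝ) × (Fin m → ℝ)

/-- The linearized covariant derivative `D_U s` on the pullback bundle `π*E → E` of the
nonlinear connection with coefficients `Γ` (so `H_i = ∂/∂xⁱ - Γᴬᵢ ∂/∂uᴬ`); for a vector field
`U` on `E` and a section `s` of `π*E`, `D_U s = fderiv s (U) + Σᵢ Uⁱ (∂Γᵢ/∂u) (s)`. -/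
def Dlin {n m : ℕ} (Γ : Fin n → EE n m → (Fin m → ℝ))
    (U : EE n m → EE n m) (s : EE n m → (Fin m → ℝ)) (p : EE n m) : Fin m → ℝ :=
  fderiv ℝ s p (U p) + ∑ i, (U p).1 i • fderiv ℝ (fun u => Γ i (p.1, u)) p.2 (s p)

/-- Vertical lift of a section `η` of `π*E`. -/
def vl {n m : ℕ} (η : EE n m → (Fin m → ℝ)) (p : EE n m) : EE n m := (0, η p)

/-- Horizontal lift of a vector field `X` along `π` with respect to the nonlinear
connection `Γ`. -/
def hl {n m : ℕ} (Γ : Fin n → EE n m → (Fin m → ℝ)) (X : EE n m → (Fin n → ℝ))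
    (p : EE n m) : EE n m := (X p, -(∑ i, X p i • Γ i p))

/-- Lie bracket of vector fields on `E`. -/
def lieBr {n m : ℕ} (U W : EE n m → EE n m) (p : EE n m) : EE n m :=
  fderiv ℝ W p (U p) - fderiv ℝ U p (W p)

/-- Curvature tensor of the linearized connection `D`. -/
def Curv {n m : ℕ} (Γ : Fin n → EE n m → (Fin m → ℝ)) (U W : EE n m → EE n m)
    (s : EE n m → (Fin m → ℝ)) (p : EE n m) : Fin m → ℝ :=
  Dlin Γ U (Dlin Γ W s) p - Dlin Γ W (Dlin Γ U s) p - Dlin Γ (lieBr U W) s p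

/-- Connector (vertical projection) of the nonlinear connection. -/
def kc {n m : ℕ} (Γ : Fin n → EE n m → (Fin m → ℝ)) (W : EE n m → EE n m)
    (p : EE n m) : Fin m → ℝ :=
  (W p).2 + ∑ i, (W p).1 i • Γ i p

/-- The derivative of a function `f` on `E` along the horizontal vector field `H_i`. -/
def hder {n m : ℕ} (Γ : Fin n → EE n m → (Fin m → ℝ)) (i : Fin n)
    (f : EE n m → (Fin m → ℝ)) (p : EE n m) : Fin m → ℝ :=
  fderiv ℝ f p (Pi.single i 1, -(Γ i p))

/-- Components `R_{ij} = H_j(Γ_i) − H_i(Γ_j)` of the curvature of the nonlinear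
connection. -/
def Rnl {n m : ℕ} (Γ : Fin n → EE n m → (Fin m → ℝ)) (i j : Fin n) (p : EE n m) :
    Fin m → ℝ :=
  hder Γ j (Γ i) p - hder Γ i (Γ j) p

theorem fderiv_comp_prodMk_right_apply {E F G : Type*} [NormedAddCommGroup E] [NormedSpace ℝ E]
    [NormedAddCommGroup F] [NormedSpace ℝ F] [NormedAddCommGroup G] [NormedSpace ℝ G]
    {f : E × F → G} {p : E × F} (hf : DifferentiableAt ℝ f p) (v : F) :
    fderiv ℝ (fun u => f (p.1, u)) p.2 v = fderiv ℝ f p (0, v) := by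
  have h : HasFDerivAt (fun u => f (p.1, u)) ((fderiv ℝ f p).comp (.inr ℝ E F)) p.2 :=
    hf.hasFDerivAt.comp p.2 (hasFDerivAt_prodMk_right p.1 p.2)
  rw [h.fderiv]
  rfl

theorem ContDiffAt.differentiableAt_fderiv {E F : Type*} [NormedAddCommGroup E]
    [NormedSpace ℝ E] [NormedAddCommGroup F] [NormedSpace ℝ F] {f : E → F} {x : E}
    (hf : ContDiffAt ℝ 2 f x) : DifferentiableAt ℝ (fderiv ℝ f) x :=
  (hf.fderiv_right (m := 1) le_rfl).differentiableAt one_ne_zero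

section LinearizedConnection

variable {n m : ℕ} {Γ : Fin n → EE n m → (Fin m → ℝ)}

theorem hl_single (l : Fin n) :
    hl Γ (fun _ => Pi.single l 1) = fun q => (Pi.single l 1, -Γ l q) := by
  funext q
  simp [hl, Pi.single_apply]

theorem hasFDerivAt_hl_single {l : Fin n} {q : EE n m} (hΓ : DifferentiableAt ℝ (Γ l) q) :
    HasFDerivAt (hl Γ fun _ => Pi.single l 1)
      ((0 : EE n m →L[ℝ] Fin n → ℝ).prod (-fderiv ℝ (Γ l) q)) q := by
  rw [hl_single]
  exact (hasFDerivAt_const _ q).prodMk hΓ.hasFDerivAt.neg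

theorem hder_eq_fderiv_hl (l : Fin n) (f : EE n m → (Fin m → ℝ)) :
    hder Γ l f = fun q => fderiv ℝ f q (hl Γ (fun _ => Pi.single l 1) q) := by
  rw [hl_single]
  rfl

theorem lieBr_hl_single_fst {i j : Fin n} {p : EE n m} (hi : DifferentiableAt ℝ (Γ i) p)
    (hj : DifferentiableAt ℝ (Γ j) p) :
    (lieBr (hl Γ fun _ => Pi.single i 1) (hl Γ fun _ => Pi.single j 1) p).1 = 0 := by
  simp [lieBr, (hasFDerivAt_hl_single hi).fderiv, (hasFDerivAt_hl_single hj).fderiv]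

theorem Dlin_const_of_fst_eq_zero {U : EE n m → EE n m} {p : EE n m} (hU : (U p).1 = 0)
    (w : Fin m → ℝ) : Dlin Γ U (fun _ => w) p = 0 := by
  simp [Dlin, hU]

theorem Dlin_hl_single {l : Fin n} {p : EE n m} (hΓ : DifferentiableAt ℝ (Γ l) p)
    (s : EE n m → (Fin m → ℝ)) :
    Dlin Γ (hl Γ fun _ => Pi.single l 1) s p = hder Γ l s p + fderiv ℝ (Γ l) p (0, s p) := by
  simp [Dlin, hder, hl_single, Pi.single_apply, fderiv_comp_prodMk_right_apply hΓ]

theorem Dlin_hl_single_const {l : Fin n} (hΓ : Differentiable ℝ (Γ l)) (w : Fin m → ℝ) :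
    Dlin Γ (hl Γ fun _ => Pi.single l 1) (fun _ => w) = fun q => fderiv ℝ (Γ l) q (0, w) := by
  funext q
  simp [Dlin_hl_single (hΓ q), hder]

theorem hder_fderiv_apply {a b : Fin n} {p : EE n m}
    (ha : DifferentiableAt ℝ (fderiv ℝ (Γ a)) p) (v : EE n m) :
    hder Γ b (fun q => fderiv ℝ (Γ a) q v) p
      = fderiv ℝ (fderiv ℝ (Γ a)) p (Pi.single b 1, -Γ b p) v := by
  simp [hder, fderiv_clm_apply ha (differentiableAt_const v)]

theorem fderiv_hder_apply {a b : Fin n} {p : EE n m}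
    (ha : DifferentiableAt ℝ (fderiv ℝ (Γ a)) p) (hb : DifferentiableAt ℝ (Γ b) p) (v : EE n m) :
    fderiv ℝ (hder Γ b (Γ a)) p v
      = fderiv ℝ (fderiv ℝ (Γ a)) p v (Pi.single b 1, -Γ b p)
        - fderiv ℝ (Γ a) p (0, fderiv ℝ (Γ b) p v) := by
  have hH := hasFDerivAt_hl_single hb
  rw [hder_eq_fderiv_hl, fderiv_clm_apply ha hH.differentiableAt, hH.fderiv]
  have hneg : ((0 : Fin n → ℝ), -fderiv ℝ (Γ b) p v) = -(0, fderiv ℝ (Γ b) p v) := by simp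
  simp only [hl_single, add_apply, ContinuousLinearMap.coe_comp,
    Function.comp_apply, ContinuousLinearMap.flip_apply, ContinuousLinearMap.prod_apply,
    zero_apply, neg_apply, hneg, map_neg]
  abel

theorem differentiableAt_hder {a b : Fin n} {p : EE n m}
    (ha : DifferentiableAt ℝ (fderiv ℝ (Γ a)) p) (hb : DifferentiableAt ℝ (Γ b) p) :
    DifferentiableAt ℝ (hder Γ b (Γ a)) p := by
  rw [hder_eq_fderiv_hl]
  exact ha.clm_apply (hasFDerivAt_hl_single hb).differentiableAt

theorem Dlin_hl_single_fderiv {a b : Fin n} {p : EE n m} (ha : ContDiffAt ℝ 2 (Γ a) p)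
    (hb : DifferentiableAt ℝ (Γ b) p) (w : Fin m → ℝ) :
    Dlin Γ (hl Γ fun _ => Pi.single b 1) (fun q => fderiv ℝ (Γ a) q (0, w)) p
      = fderiv ℝ (hder Γ b (Γ a)) p (0, w)
        + (fderiv ℝ (Γ a) p (0, fderiv ℝ (Γ b) p (0, w))
          + fderiv ℝ (Γ b) p (0, fderiv ℝ (Γ a) p (0, w))) := by
  have hda := ha.differentiableAt_fderiv
  rw [Dlin_hl_single hb, hder_fderiv_apply hda, fderiv_hder_apply hda hb,
    (ha.isSymmSndFDerivAt (by simp)).eq]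
  abel

theorem hasFDerivAt_Rnl {i j : Fin n} {p : EE n m} (hi : ContDiffAt ℝ 2 (Γ i) p)
    (hj : ContDiffAt ℝ 2 (Γ j) p) :
    HasFDerivAt (Rnl Γ i j) (fderiv ℝ (hder Γ j (Γ i)) p - fderiv ℝ (hder Γ i (Γ j)) p) p := by
  have hij := differentiableAt_hder hi.differentiableAt_fderiv (hj.differentiableAt two_ne_zero)
  have hji := differentiableAt_hder hj.differentiableAt_fderiv (hi.differentiableAt two_ne_zero)
  exact hij.hasFDerivAt.sub hji.hasFDerivAt

end LinearizedConnection

/-- The HH-component of the curvature of the linearized connection is minus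
the fibre derivative of the curvature of the nonlinear connection:
`Curv(H_i, H_j)e_A = −(∂R^B_{ij}/∂u^A) e_B`. -/
theorem curvature_HH_is_fibre_derivative_of_R {n m : ℕ}
    (Γ : Fin n → EE n m → (Fin m → ℝ)) (hΓ : ∀ i, ContDiff ℝ (⊤ : ℕ∞) (Γ i))
    (i j : Fin n) (A : Fin m) (p : EE n m) :
    Curv Γ (hl Γ fun _ => Pi.single i 1) (hl Γ fun _ => Pi.single j 1)
        (fun _ => Pi.single A 1) p
      = -(fderiv ℝ (fun u => Rnl Γ i j (p.1, u)) p.2 (Pi.single A 1)) := by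
  have hC2 : ∀ k q, ContDiffAt ℝ 2 (Γ k) q := fun k _ =>
    (hΓ k).contDiffAt.of_le (WithTop.coe_le_coe.mpr le_top)
  have hd : ∀ k, Differentiable ℝ (Γ k) := fun k q => (hC2 k q).differentiableAt two_ne_zero
  have hR := hasFDerivAt_Rnl (hC2 i p) (hC2 j p)
  set e : Fin m → ℝ := Pi.single A 1
  calc Curv Γ (hl Γ fun _ => Pi.single i 1) (hl Γ fun _ => Pi.single j 1) (fun _ => e) p
      = Dlin Γ (hl Γ fun _ => Pi.single i 1) (fun q => fderiv ℝ (Γ j) q (0, e)) p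
        - Dlin Γ (hl Γ fun _ => Pi.single j 1) (fun q => fderiv ℝ (Γ i) q (0, e)) p - 0 := by
        rw [Curv, Dlin_hl_single_const (hd i), Dlin_hl_single_const (hd j),
          Dlin_const_of_fst_eq_zero (lieBr_hl_single_fst (hd i p) (hd j p))]
    _ = -(fderiv ℝ (hder Γ j (Γ i)) p (0, e) - fderiv ℝ (hder Γ i (Γ j)) p (0, e)) := by
        rw [Dlin_hl_single_fderiv (hC2 j p) (hd i p), Dlin_hl_single_fderiv (hC2 i p) (hd j p)]
        abel
    _ = -(fderiv ℝ (fun u => Rnl Γ i j (p.1, u)) p.2 e) := by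
        rw [fderiv_comp_prodMk_right_apply hR.differentiableAt, hR.fderiv]
        rfl
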